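/- arXiv:math/0205193 — 3 statements merged into one kernel-verified Lean document; each statement's English description precedes it below -/
import Mathlib

section
/- Let t be a real number with 0 < |t| < 1. Then for every natural number n, |t|^{-2n} ≤ |[n+1]_t| ≤ (n+1)·|t|^{-2n}, where [m]_t = (t^{2m} - t^{-2m})/(t^2 - t^{-2}). -/
theorem quantum_integer_bounds (t : ℝ) (ht0 : 0 < |t|) (ht1 : |t| < 1) (n : ℕ) :
    |t| ^ (-(2 * n : ℤ)) ≤
        |(t ^ (2 * (n + 1) : ℤ) - t ^ (-(2 * (n + 1) : ℤ))) / (t ^ (2 : ℤ) - t ^ (-2 : ℤ))| ∧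
      |(t ^ (2 * (n + 1) : ℤ) - t ^ (-(2 * (n + 1) : ℤ))) / (t ^ (2 : ℤ) - t ^ (-2 : ℤ))| ≤
        (n + 1) * |t| ^ (-(2 * n : ℤ)) := by
  have ht : t ≠ 0 := by
    intro h; simp [h] at ht0
  have habs4 : |t| ^ 4 < 1 := pow_lt_one₀ (abs_nonneg t) ht1 (by norm_num)
  have ht4lt : t ^ 4 < 1 := by
    have : t ^ 4 = |t| ^ 4 := by rw [← abs_pow]; exact (abs_of_nonneg (by positivity)).symm
    linarith
  have h4 : (t : ℝ) ^ 4 ≠ 1 := ne_of_lt ht4lt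
  set S : ℝ := ∑ i ∈ Finset.range (n + 1), (t ^ 4) ^ i with hS
  have key : (t ^ (2 * (n + 1) : ℤ) - t ^ (-(2 * (n + 1) : ℤ))) / (t ^ (2 : ℤ) - t ^ (-2 : ℤ))
      = t ^ (-(2 * n : ℤ)) * S := by
    rw [hS, geom_sum_eq h4]
    rw [show (2 * (n + 1) : ℤ) = ((2 * (n + 1) : ℕ) : ℤ) by push_cast; ring,
      show (2 * n : ℤ) = ((2 * n : ℕ) : ℤ) by push_cast; ring,
      show ((2 : ℤ)) = ((2 : ℕ) : ℤ) by norm_num]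
    simp only [zpow_neg, zpow_natCast]
    have h2 : t ^ 2 - (t ^ 2)⁻¹ ≠ 0 := by
      rw [sub_ne_zero]
      intro h
      have : (t ^ 2) * (t ^ 2) = 1 := by
        field_simp at h
        linarith [h]
      have : t ^ 4 = 1 := by nlinarith
      exact h4 this
    have h41 : t ^ 4 - 1 ≠ 0 := sub_ne_zero.mpr h4
    rw [mul_div_assoc', div_eq_div_iff h2 h41]
    field_simp
    ring
  rw [key, abs_mul]
  have hSpos : ∀ i ∈ Finset.range (n + 1), (0:ℝ) ≤ (t ^ 4) ^ i := by
    intro i _; positivity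
  have hS1 : (1 : ℝ) ≤ S := by
    have := Finset.single_le_sum hSpos (Finset.mem_range.mpr (Nat.succ_pos n))
    simpa using this
  have hSn : S ≤ (n + 1 : ℝ) := by
    have : S ≤ (n + 1) • (1 : ℝ) := Finset.sum_le_card_nsmul _ _ 1 (by
      intro i _
      exact pow_le_one₀ (by positivity) (le_of_lt ht4lt)) |>.trans (by simp)
    simpa using this
  have habsz : |t ^ (-(2 * n : ℤ))| = |t| ^ (-(2 * n : ℤ)) := by
    rw [show (-(2 * n : ℤ)) = -((2 * n : ℕ) : ℤ) by push_cast; ring]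
    simp only [zpow_neg, zpow_natCast, abs_inv, abs_pow]
  have hSabs : |S| = S := abs_of_nonneg (by linarith)
  rw [habsz, hSabs]
  have hpos : (0:ℝ) < |t| ^ (-(2 * n : ℤ)) := zpow_pos ht0 _
  constructor
  · nlinarith
  · nlinarith
end

section
/- Fix an integer g ≥ 2. Then lim_{r→∞} Σ_{u=1}^{r-1} (sin(uπ/r)/sin(π/r))^{-(2g-2)} = 2·ζ(2g-2), where ζ is the Riemann zeta function. -/
/-!
The reflection `[r - u]_r = [u]_r` splits the sum into two copies of a sum over `1 ≤ u ≤ r / 2`.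
On that range Jordan's inequality `sin x ≥ 2x/π` together with `sin x ≤ x` gives
`[u]_r ≥ 2u/π`, a bound uniform in `r` whose `-(2g-2)`-th power is summable; since `[u]_r → u`
for each fixed `u`, Tannery's theorem makes each copy converge to `ζ(2g-2)`.
-/

open Real Filter Topology

open Finset in
theorem Finset.sum_Icc_one_pred_eq_of_symmetric {M : Type*} [AddCommMonoid M] {r : ℕ}
    {f : ℕ → M} (hf : ∀ u ≤ r, f (r - u) = f u) :
    ∑ u ∈ Icc 1 (r - 1), f u
      = ∑ k ∈ range (r / 2), f (k + 1) + ∑ k ∈ range ((r - 1) / 2), f (k + 1) := by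
  have h_Icc : Icc 1 (r - 1) = Ico 1 r := by ext; simp only [mem_Icc, mem_Ico]; omega
  have h_len : r - 1 = r / 2 + (r - 1) / 2 := by omega
  rw [h_Icc, sum_Ico_eq_sum_range, congrArg range h_len, sum_range_add,
    ← sum_range_reflect _ ((r - 1) / 2)]
  congr 1
  · simp only [add_comm 1]
  · refine sum_congr rfl fun k hk => ?_
    rw [mem_range] at hk
    rw [← hf (k + 1) (by omega)]
    congr 1
    omega

theorem tendsto_sum_range_of_dominated_convergence {α G : Type*} {𝓕 : Filter α}
    [NormedAddCommGroup G] [CompleteSpace G] {f : α → ℕ → G} {g : ℕ → G}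
    {bound : ℕ → ℝ} {N : α → ℕ} (h_sum : Summable bound)
    (hab : ∀ k, Tendsto (f · k) 𝓕 (𝓝 (g k))) (hN : Tendsto N 𝓕 atTop)
    (h_bound : ∀ᶠ a in 𝓕, ∀ k < N a, ‖f a k‖ ≤ bound k) :
    Tendsto (fun a => ∑ k ∈ Finset.range (N a), f a k) 𝓕 (𝓝 (∑' k, g k)) := by
  set F : α → ℕ → G := fun a k => if k < N a then f a k else 0
  have hF_sum (a : α) : ∑' k, F a k = ∑ k ∈ Finset.range (N a), f a k := by
    rw [tsum_eq_sum (s := Finset.range (N a)) fun k hk => if_neg (by simpa using hk)]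
    exact Finset.sum_congr rfl fun k hk => if_pos (Finset.mem_range.mp hk)
  have hF_lim (k : ℕ) : Tendsto (F · k) 𝓕 (𝓝 (g k)) :=
    (hab k).congr' <| (hN.eventually_gt_atTop k).mono fun a hk => (if_pos hk).symm
  have hF_bound : ∀ᶠ a in 𝓕, ∀ k, ‖F a k‖ ≤ |bound k| := by
    filter_upwards [h_bound] with a ha k
    by_cases hk : k < N a
    · simpa only [F, if_pos hk] using (ha k hk).trans (le_abs_self _)
    · simp only [F, if_neg hk, norm_zero, abs_nonneg]
  simpa only [hF_sum] using tendsto_tsum_of_dominated_convergence h_sum.abs hF_lim hF_bound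

/-- The quantum integer `[u]_r` at `t = exp (iπ / (2r))`. -/
noncomputable def quantumInt (r : ℕ) (u : ℝ) : ℝ := sin (u * π / r) / sin (π / r)

theorem quantumInt_sub (r : ℕ) (u : ℝ) : quantumInt r (r - u) = quantumInt r u := by
  rcases eq_or_ne r 0 with rfl | hr
  · simp [quantumInt]
  · rw [quantumInt, quantumInt, sub_mul, sub_div, mul_div_cancel_left₀ _ (by positivity),
      sin_pi_sub]

theorem quantumInt_eq_mul_sinc_div_sinc {r : ℕ} (hr : r ≠ 0) (u : ℝ) :
    quantumInt r u = u * sinc (u * π / r) / sinc (π / r) := by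
  rcases eq_or_ne u 0 with rfl | hu
  · simp [quantumInt]
  · rw [quantumInt, sinc_of_ne_zero (by positivity), sinc_of_ne_zero (by positivity)]
    field_simp

theorem tendsto_quantumInt (u : ℝ) : Tendsto (quantumInt · u) atTop (𝓝 u) := by
  have h_sinc (c : ℝ) : Tendsto (fun r : ℕ => sinc (c / r)) atTop (𝓝 1) := by
    simpa [Function.comp_def] using
      (continuous_sinc.tendsto 0).comp (tendsto_const_div_atTop_nhds_zero_nat c)
  have h : Tendsto (fun r : ℕ => u * sinc (u * π / r) / sinc (π / r)) atTop
      (𝓝 (u * 1 / 1)) := ((h_sinc (u * π)).const_mul u).div (h_sinc π) one_ne_zero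
  rw [mul_one, div_one] at h
  exact h.congr' <| (eventually_ne_atTop 0).mono fun r hr =>
    (quantumInt_eq_mul_sinc_div_sinc hr u).symm

theorem two_mul_div_pi_le_quantumInt {r : ℕ} {u : ℝ} (hr : 1 < r) (hu : 0 ≤ u)
    (hur : 2 * u ≤ r) : 2 * u / π ≤ quantumInt r u := by
  have hr0 : (0 : ℝ) < r := by positivity
  have h_angle : 0 < π / r := by positivity
  have h_sin_pos : 0 < sin (π / r) :=
    sin_pos_of_pos_of_lt_pi h_angle (div_lt_self pi_pos (by exact_mod_cast hr))
  have h_jordan : 2 / π * (u * π / r) ≤ sin (u * π / r) := by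
    refine mul_le_sin (by positivity) ?_
    rw [div_le_div_iff₀ hr0 two_pos]
    nlinarith [pi_pos]
  calc 2 * u / π = 2 / π * (u * π / r) / (π / r) := by field_simp
    _ ≤ sin (u * π / r) / (π / r) := by gcongr
    _ ≤ quantumInt r u :=
      div_le_div_of_nonneg_left ((by positivity : (0 : ℝ) ≤ _).trans h_jordan) h_sin_pos
        (sin_le h_angle.le)

theorem norm_quantumInt_zpow_neg_le (n : ℕ) {r : ℕ} {u : ℝ} (hr : 1 < r) (hu : 0 < u)
    (hur : 2 * u ≤ r) : ‖quantumInt r u ^ (-(n : ℤ))‖ ≤ (π / (2 * u)) ^ n := by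
  have h_low := two_mul_div_pi_le_quantumInt hr hu.le hur
  have h_pos : 0 < quantumInt r u := (by positivity : (0 : ℝ) < 2 * u / π).trans_le h_low
  rw [zpow_neg, zpow_natCast, norm_inv, norm_pow, Real.norm_of_nonneg h_pos.le, ← inv_pow,
    ← inv_div]
  gcongr

theorem summable_pi_div_two_mul_succ_pow {n : ℕ} (hn : 1 < n) :
    Summable fun k : ℕ => (π / (2 * ((k : ℝ) + 1))) ^ n := by
  have h : Summable fun k : ℕ => 1 / ((k : ℝ) + 1) ^ n := by
    simpa using (summable_nat_add_iff 1).mpr (summable_one_div_nat_pow.mpr hn)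
  refine (h.mul_left ((π / 2) ^ n)).congr fun k => ?_
  rw [mul_one_div, ← div_pow, div_div]

theorem tendsto_sum_quantumInt_zpow_neg {n : ℕ} (hn : 1 < n) :
    Tendsto (fun r : ℕ => ∑ u ∈ Finset.Icc 1 (r - 1), quantumInt r u ^ (-(n : ℤ))) atTop
      (𝓝 (2 * ∑' k : ℕ, 1 / ((k : ℝ) + 1) ^ n)) := by
  set f : ℕ → ℕ → ℝ := fun r k => quantumInt r (k + 1 : ℕ) ^ (-(n : ℤ))
  have h_lim (k : ℕ) : Tendsto (f · k) atTop (𝓝 (1 / ((k : ℝ) + 1) ^ n)) := by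
    have := (tendsto_quantumInt (k + 1 : ℕ)).zpow₀ (-(n : ℤ)) (Or.inl (by positivity))
    simpa [f, zpow_neg] using this
  have h_half {N : ℕ → ℕ} (hN : Tendsto N atTop atTop) (hNr : ∀ r, N r ≤ r / 2) :
      Tendsto (fun r => ∑ k ∈ Finset.range (N r), f r k) atTop
        (𝓝 (∑' k : ℕ, 1 / ((k : ℝ) + 1) ^ n)) := by
    refine tendsto_sum_range_of_dominated_convergence (summable_pi_div_two_mul_succ_pow hn)
      h_lim hN (Eventually.of_forall fun r k hk => ?_)
    have hk2 : 2 * (k + 1) ≤ r := by have := hNr r; omega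
    simpa [f] using norm_quantumInt_zpow_neg_le n (r := r) (u := (k + 1 : ℕ))
      (by omega) (by positivity) (by exact_mod_cast hk2)
  have h_sum := (h_half (Nat.tendsto_div_const_atTop two_ne_zero) fun r => le_rfl).add
    (h_half ((Nat.tendsto_div_const_atTop two_ne_zero).comp (tendsto_sub_atTop_nat 1))
      fun r => Nat.div_le_div_right (Nat.sub_le r 1))
  rw [← two_mul] at h_sum
  refine h_sum.congr fun r => (Finset.sum_Icc_one_pred_eq_of_symmetric fun u hu => ?_).symm
  rw [Nat.cast_sub hu, quantumInt_sub]

theorem two_mul_riemannZeta_natCast {n : ℕ} (hn : 1 < n) :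
    2 * riemannZeta n = ((2 * ∑' k : ℕ, 1 / ((k : ℝ) + 1) ^ n : ℝ) : ℂ) := by
  rw [zeta_eq_tsum_one_div_nat_add_one_cpow (by simpa using hn)]
  push_cast [Complex.ofReal_tsum]
  simp only [Complex.cpow_natCast]

theorem root_of_unity_yang_mills_limit (g : ℕ) (hg : 2 ≤ g) :
    Tendsto
      (fun r : ℕ =>
        ((∑ u ∈ Finset.Icc 1 (r - 1),
            (sin (u * π / r) / sin (π / r)) ^ (-(2 * (g : ℤ) - 2)) : ℝ) : ℂ))
      atTop (𝓝 (2 * riemannZeta (2 * g - 2))) := by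
  obtain ⟨n, hn, hgn⟩ : ∃ n : ℕ, 1 < n ∧ 2 * g = n + 2 :=
    ⟨2 * g - 2, by omega, by omega⟩
  have hnℤ : 2 * (g : ℤ) - 2 = n := by omega
  have hnℂ : 2 * (g : ℂ) - 2 = n := by
    rw [sub_eq_iff_eq_add]; exact_mod_cast hgn
  rw [hnℤ, hnℂ, two_mul_riemannZeta_natCast hn]
  exact (Complex.continuous_ofReal.tendsto _).comp (tendsto_sum_quantumInt_zpow_neg hn)
end

section
/- Let G ≥ 2 be an integer. Then Σ_{u=1}^{∞} 2/(u^{2G-1}·(u+1)^{2G-1}) = 2·Σ_{j=1}^{2G-1} C(4G-j-3, 2G-j-1) - 4·Σ_{j=1}^{G-1} C(4G-2j-3, 2G-2j-1)·ζ(2j), where ζ(2j) = Σ_{n≥1} n^{-2j} and C(·,·) is the binomial coefficient. -/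
/-!
For `x ≠ 0, -1` partial fractions give
`1 / (x^n (x+1)^n) = ∑_{k<n} C(n+k-1, k) ((-1)^k / x^(n-k) + (-1)^n / (x+1)^(n-k))`.
For odd `n` and `x = u + 1`, the `k`-th term summed over `u` telescopes to `1` when `k` is even,
while for odd `k` the two shifted zeta series add up to `1 - 2 ζ(n - k)`.
With `n = 2G - 1`, writing the odd `k` as `n - 2j` turns this into the stated formula.
-/

open Finset Filter Topology

section PartialFractions

variable {K : Type*} [Field K]

/-- The principal part at `z = 0` of `z⁻ᵃ (1 - s z)⁻ᵇ`. -/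
def principalPart (s : K) (a b : ℕ) (z : K) : K :=
  ∑ k ∈ range a, s ^ k * ((b + k - 1).choose k : K) / z ^ (a - k)

@[simp]
lemma principalPart_zero_left (s : K) (b : ℕ) (z : K) : principalPart s 0 b z = 0 := by
  simp [principalPart]

lemma principalPart_zero_right (s : K) (a : ℕ) (z : K) :
    principalPart s (a + 1) 0 z = 1 / z ^ (a + 1) := by
  simp [principalPart, sum_range_succ']

lemma principalPart_succ_succ (s : K) (a b : ℕ) (z : K) :
    principalPart s (a + 1) (b + 1) z =
      principalPart s (a + 1) b z + s * principalPart s a (b + 1) z := by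
  simp only [principalPart]
  rw [sum_range_succ', sum_range_succ' _ a, mul_sum,
    add_right_comm (∑ k ∈ range a, _) (s ^ 0 * _ / _), ← sum_add_distrib]
  congr 1
  · refine sum_congr rfl fun k _ => ?_
    rw [show b + 1 + (k + 1) - 1 = (b + k) + 1 by omega, Nat.choose_succ_succ',
      show b + (k + 1) - 1 = b + k by omega, show b + 1 + k - 1 = b + k by omega,
      show a + 1 - (k + 1) = a - k by omega]
    push_cast
    ring
  · simp

lemma one_div_pow_mul_add_one_pow {x : K} (hx : x ≠ 0) (hx₁ : x + 1 ≠ 0) :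
    ∀ a b : ℕ, a + b ≠ 0 → 1 / (x ^ a * (x + 1) ^ b) =
      principalPart (-1) a b x + (-1) ^ a * principalPart 1 b a (x + 1)
  | 0, 0, h => absurd rfl h
  | 0, b + 1, _ => by simp [principalPart_zero_right]
  | a + 1, 0, _ => by simp [principalPart_zero_right]
  | a + 1, b + 1, _ => by
    have hsplit : 1 / (x ^ (a + 1) * (x + 1) ^ (b + 1)) =
        1 / (x ^ (a + 1) * (x + 1) ^ b) - 1 / (x ^ a * (x + 1) ^ (b + 1)) := by
      field_simp
      ring
    rw [hsplit, one_div_pow_mul_add_one_pow hx hx₁ (a + 1) b (by omega),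
      one_div_pow_mul_add_one_pow hx hx₁ a (b + 1) (by omega),
      principalPart_succ_succ, principalPart_succ_succ]
    ring

lemma one_div_pow_mul_add_one_pow_self {x : K} (hx : x ≠ 0) (hx₁ : x + 1 ≠ 0) {n : ℕ}
    (hn : n ≠ 0) : 1 / (x ^ n * (x + 1) ^ n) =
      ∑ k ∈ range n, ((n + k - 1).choose k : K) *
        ((-1) ^ k / x ^ (n - k) + (-1) ^ n / (x + 1) ^ (n - k)) := by
  rw [one_div_pow_mul_add_one_pow hx hx₁ n n (by omega), principalPart, principalPart, mul_sum,
    ← sum_add_distrib]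
  refine sum_congr rfl fun k _ => ?_
  ring

end PartialFractions

section Series

lemma summable_one_div_nat_add_one_pow {p : ℕ} (hp : 2 ≤ p) :
    Summable (fun n : ℕ => 1 / ((n : ℝ) + 1) ^ p) := by
  simpa using (summable_nat_add_iff 1).mpr (Real.summable_one_div_nat_pow.mpr hp)

lemma hasSum_one_div_nat_add_two_pow {p : ℕ} (hp : 2 ≤ p) :
    HasSum (fun n : ℕ => 1 / ((n : ℝ) + 2) ^ p) (∑' n : ℕ, 1 / ((n : ℝ) + 1) ^ p - 1) := by
  have h := (hasSum_nat_add_iff' 1).mpr (summable_one_div_nat_add_one_pow hp).hasSum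
  simpa [add_assoc, one_add_one_eq_two] using h

lemma hasSum_one_div_nat_add_one_pow_sub {p : ℕ} (hp : p ≠ 0) :
    HasSum (fun n : ℕ => 1 / ((n : ℝ) + 1) ^ p - 1 / ((n : ℝ) + 2) ^ p) 1 := by
  have hnonneg : ∀ n : ℕ, 0 ≤ 1 / ((n : ℝ) + 1) ^ p - 1 / ((n : ℝ) + 2) ^ p := fun n => by
    rw [sub_nonneg]
    gcongr
    linarith
  rw [hasSum_iff_tendsto_nat_of_nonneg hnonneg]
  have htele : ∀ N : ℕ, ∑ n ∈ range N, (1 / ((n : ℝ) + 1) ^ p - 1 / ((n : ℝ) + 2) ^ p) =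
      1 - 1 / ((N : ℝ) + 1) ^ p := fun N => by
    simpa [add_assoc, one_add_one_eq_two] using
      sum_range_sub' (fun n : ℕ => 1 / ((n : ℝ) + 1) ^ p) N
  have hlim : Tendsto (fun N : ℕ => 1 / ((N : ℝ) + 1) ^ p) atTop (𝓝 0) := by
    simpa [one_div_pow, zero_pow hp] using
      (tendsto_one_div_add_atTop_nhds_zero_nat (𝕜 := ℝ)).pow p
  simp only [htele]
  simpa using hlim.const_sub 1

lemma hasSum_neg_one_pow_div_sub {k p : ℕ} (hp : p ≠ 0) (hodd : Odd k → 2 ≤ p) :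
    HasSum (fun n : ℕ => (-1) ^ k / ((n : ℝ) + 1) ^ p - 1 / ((n : ℝ) + 2) ^ p)
      (1 - 2 * if Odd k then ∑' n : ℕ, 1 / ((n : ℝ) + 1) ^ p else 0) := by
  rcases Nat.even_or_odd k with hk | hk
  · simpa [hk.neg_one_pow, Nat.not_odd_iff_even.mpr hk] using
      hasSum_one_div_nat_add_one_pow_sub hp
  · set ζ := ∑' n : ℕ, 1 / ((n : ℝ) + 1) ^ p
    rw [if_pos hk, show 1 - 2 * ζ = -(ζ + (ζ - 1)) by ring]
    refine ((summable_one_div_nat_add_one_pow (hodd hk)).hasSum.add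
      (hasSum_one_div_nat_add_two_pow (hodd hk))).neg.congr_fun fun n => ?_
    rw [hk.neg_one_pow]
    ring

end Series

lemma hasSum_one_div_pow_mul_pow_of_odd {n : ℕ} (hn : Odd n) :
    HasSum (fun u : ℕ => 1 / (((u : ℝ) + 1) ^ n * ((u : ℝ) + 2) ^ n))
      (∑ k ∈ range n, ((n + k - 1).choose k : ℝ) - 2 * ∑ k ∈ range n with Odd k,
        ((n + k - 1).choose k : ℝ) * ∑' m : ℕ, 1 / ((m : ℝ) + 1) ^ (n - k)) := by
  have hterm : ∀ k ∈ range n, HasSum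
      (fun u : ℕ => ((n + k - 1).choose k : ℝ) *
        ((-1) ^ k / ((u : ℝ) + 1) ^ (n - k) - 1 / ((u : ℝ) + 2) ^ (n - k)))
      (((n + k - 1).choose k : ℝ) *
        (1 - 2 * if Odd k then ∑' m : ℕ, 1 / ((m : ℝ) + 1) ^ (n - k) else 0)) := fun k hk => by
    rw [mem_range] at hk
    refine (hasSum_neg_one_pow_div_sub (by omega) fun hk' => ?_).mul_left _
    obtain ⟨a, rfl⟩ := hn
    obtain ⟨b, rfl⟩ := hk'
    omega
  have hvalue : ∑ k ∈ range n, ((n + k - 1).choose k : ℝ) - 2 * ∑ k ∈ range n with Odd k,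
        ((n + k - 1).choose k : ℝ) * ∑' m : ℕ, 1 / ((m : ℝ) + 1) ^ (n - k) =
      ∑ k ∈ range n, ((n + k - 1).choose k : ℝ) *
        (1 - 2 * if Odd k then ∑' m : ℕ, 1 / ((m : ℝ) + 1) ^ (n - k) else 0) := by
    rw [sum_filter, mul_sum, ← sum_sub_distrib]
    refine sum_congr rfl fun k _ => ?_
    split_ifs <;> ring
  rw [hvalue]
  refine (hasSum_sum hterm).congr_fun fun u => ?_
  have h := one_div_pow_mul_add_one_pow_self (x := (u : ℝ) + 1) (by positivity) (by positivity)
    hn.pos.ne'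
  rw [add_assoc, one_add_one_eq_two, hn.neg_one_pow] at h
  rw [h]
  refine sum_congr rfl fun k _ => ?_
  ring

section Reindexing

variable {M : Type*} [AddCommMonoid M]

lemma sum_Icc_one_sub_eq_sum_range (f : ℕ → M) (n : ℕ) :
    ∑ j ∈ Icc 1 n, f (n - j) = ∑ k ∈ range n, f k :=
  sum_nbij' (fun j => n - j) (fun k => n - k) (by simp; omega) (by simp; omega)
    (by simp; omega) (by simp; omega) (fun _ _ => rfl)

lemma sum_range_filter_odd_eq_sum_Icc (f : ℕ → M) (m : ℕ) :
    ∑ k ∈ range (2 * m + 1) with Odd k, f k = ∑ j ∈ Icc 1 m, f (2 * m + 1 - 2 * j) :=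
  sum_nbij' (fun k => (2 * m + 1 - k) / 2) (fun j => 2 * m + 1 - 2 * j)
    (by simp [Nat.odd_iff]; omega) (by simp [Nat.odd_iff]; omega)
    (by simp [Nat.odd_iff]; omega) (by simp; omega)
    (fun k hk => by simp [Nat.odd_iff] at hk; congr; omega)

end Reindexing

theorem equal_genus_integral (G : ℕ) (hG : 2 ≤ G) :
    ∑' u : ℕ, (2 : ℝ) / ((u + 1) ^ (2 * G - 1) * (u + 2) ^ (2 * G - 1)) =
      2 * (∑ j ∈ Finset.Icc 1 (2 * G - 1),
            ((4 * G - j - 3).choose (2 * G - j - 1) : ℝ)) -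
        4 * ∑ j ∈ Finset.Icc 1 (G - 1),
            ((4 * G - 2 * j - 3).choose (2 * G - 2 * j - 1) : ℝ) *
              ∑' n : ℕ, (1 : ℝ) / (n + 1) ^ (2 * j) := by
  set n := 2 * G - 1 with hn
  have hodd : Odd n := ⟨G - 1, by omega⟩
  have hchoose : ∑ j ∈ Icc 1 n, ((4 * G - j - 3).choose (2 * G - j - 1) : ℝ) =
      ∑ k ∈ range n, ((n + k - 1).choose k : ℝ) := by
    rw [← sum_Icc_one_sub_eq_sum_range]
    refine sum_congr rfl fun j hj => ?_
    rw [mem_Icc] at hj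
    congr 2 <;> omega
  have hzeta : ∑ j ∈ Icc 1 (G - 1), ((4 * G - 2 * j - 3).choose (2 * G - 2 * j - 1) : ℝ) *
        ∑' m : ℕ, 1 / ((m : ℝ) + 1) ^ (2 * j) =
      ∑ k ∈ range n with Odd k,
        ((n + k - 1).choose k : ℝ) * ∑' m : ℕ, 1 / ((m : ℝ) + 1) ^ (n - k) := by
    rw [show n = 2 * (G - 1) + 1 by omega, sum_range_filter_odd_eq_sum_Icc]
    refine sum_congr rfl fun j hj => ?_
    rw [mem_Icc] at hj
    rw [Nat.sub_sub_self (by omega : 2 * j ≤ 2 * (G - 1) + 1)]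
    congr 3 <;> omega
  simp_rw [div_eq_mul_one_div (2 : ℝ)]
  rw [hchoose, hzeta, tsum_mul_left, (hasSum_one_div_pow_mul_pow_of_odd hodd).tsum_eq]
  ring
end
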